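/- arXiv:1807.08214 — 7 statements merged into one kernel-verified Lean document; each statement's English description precedes it below -/
import Mathlib

section
/- Let h > 1 and v ∈ [0,1]. Then (1-v) + v·h - h^v ≤ L(1,h)·log S(h), where L(1,h) = (h-1)/log h is the logarithmic mean and S(h) = h^(1/(h-1))/(e·log h^(1/(h-1))) is the Specht ratio. -/
/-!
With `L = (h - 1) / log h` one has `log S(h) = 1 / L - 1 + log L`, and the inequality becomes
`L * (v * log h - log L + 1) ≤ exp (v * log h)`: the tangent of `exp` at `log L` lies below `exp`.
-/

open Real

theorem Real.mul_sub_log_add_one_le_exp {c : ℝ} (hc : 0 < c) (t : ℝ) :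
    c * (t - log c + 1) ≤ exp t := by
  calc c * (t - log c + 1) ≤ c * exp (t - log c) :=
        mul_le_mul_of_nonneg_left (by linarith [add_one_le_exp (t - log c)]) hc.le
    _ = exp t := by rw [exp_sub, exp_log hc, mul_div_cancel₀ _ hc.ne']

theorem Real.log_spechtRatio {h : ℝ} (h0 : 0 < h) (h1 : h ≠ 1) :
    log (h ^ (1 / (h - 1)) / (exp 1 * ((1 / (h - 1)) * log h))) =
      log h / (h - 1) - 1 + log ((h - 1) / log h) := by
  have hsub : h - 1 ≠ 0 := sub_ne_zero.mpr h1
  have hlog : log h ≠ 0 := log_ne_zero_of_pos_of_ne_one h0 h1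
  have hx : (1 / (h - 1)) * log h = ((h - 1) / log h)⁻¹ := by
    rw [inv_div]; ring
  rw [log_div (rpow_pos_of_pos h0 _).ne' (by simp [hsub, hlog, exp_ne_zero]), log_rpow h0,
    log_mul (exp_ne_zero 1) (by simp [hsub, hlog]), log_exp, hx, log_inv, inv_div]
  ring

theorem stmt_8_general (h v : ℝ) (hh : 1 < h) :
    (1 - v) + v * h - h ^ v ≤
      (h - 1) / Real.log h *
        Real.log (h ^ (1 / (h - 1)) /
          (Real.exp 1 * ((1 / (h - 1)) * Real.log h))) := by
  have h0 : 0 < h := by linarith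
  have hl : 0 < log h := log_pos hh
  rw [log_spechtRatio h0 hh.ne']
  set L := (h - 1) / log h with hL
  have hLpos : 0 < L := div_pos (sub_pos.mpr hh) hl
  have hLlog : L * log h = h - 1 := div_mul_cancel₀ _ hl.ne'
  have hLinv : L * (log h / (h - 1)) = 1 := by
    rw [hL, div_mul_div_comm, mul_comm, div_self (by positivity)]
  have tangent := mul_sub_log_add_one_le_exp hLpos (log h * v)
  rw [← rpow_def_of_pos h0] at tangent
  linear_combination tangent - v * hLlog - hLinv

theorem stmt_8 (h v : ℝ) (hh : 1 < h) (hv0 : 0 ≤ v) (hv1 : v ≤ 1) :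
    (1 - v) + v * h - h ^ v ≤
      (h - 1) / Real.log h *
        Real.log (h ^ (1 / (h - 1)) /
          (Real.exp 1 * ((1 / (h - 1)) * Real.log h))) :=
  stmt_8_general h v hh
end

section
/- For positive reals a, b with s·a ≤ b ≤ t·a for some 0 < s ≤ t ≤ 1, and v ∈ [0,1]: f_v(t)·a^(1-v)·b^v ≤ (1-v)a + vb ≤ f_v(s)·a^(1-v)·b^v, where f_v(x) = ((1-v)+vx)/x^v. -/
/-!
Writing `b = r a` with `r = b / a ∈ [s, t]`, homogeneity gives
`(1 - v) a + v b = f_v(r) · a^(1-v) b^v`, so both bounds reduce to `f_v(t) ≤ f_v(r) ≤ f_v(s)`.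
This holds because `f_v(x) = (1 - v) x^(-v) + v x^(1-v)` has derivative
`v (1 - v) x^(-v-1) (x - 1) ≤ 0`, so `f_v` is antitone on `(0, 1]`.
-/

open Real Set

/-- The paper's `f_v(x)`: weighted arithmetic over weighted geometric mean of `1` and `x`. -/
noncomputable def weightedMeanRatio (v x : ℝ) : ℝ := ((1 - v) + v * x) / x ^ v

lemma weightedMeanRatio_eq_add_rpow (v : ℝ) {x : ℝ} (hx : 0 < x) :
    weightedMeanRatio v x = (1 - v) * x ^ (-v) + v * x ^ (1 - v) := by
  rw [weightedMeanRatio, rpow_neg hx.le, rpow_sub hx, rpow_one]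
  field_simp

lemma hasDerivAt_rpow_combination (v : ℝ) {x : ℝ} (hx : 0 < x) :
    HasDerivAt (fun y => (1 - v) * y ^ (-v) + v * y ^ (1 - v))
      (v * (1 - v) * x ^ (-v - 1) * (x - 1)) x := by
  have h : HasDerivAt (fun y => (1 - v) * y ^ (-v) + v * y ^ (1 - v))
      ((1 - v) * (-v * x ^ (-v - 1)) + v * ((1 - v) * x ^ (1 - v - 1))) x :=
    ((hasDerivAt_rpow_const (Or.inl hx.ne')).const_mul (1 - v)).add
      ((hasDerivAt_rpow_const (Or.inl hx.ne')).const_mul v)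
  refine h.congr_deriv ?_
  rw [show (1 : ℝ) - v - 1 = -v - 1 + 1 by ring, rpow_add_one hx.ne']
  ring

lemma antitoneOn_weightedMeanRatio {v : ℝ} (hv0 : 0 ≤ v) (hv1 : v ≤ 1) :
    AntitoneOn (weightedMeanRatio v) (Ioc 0 1) := by
  refine AntitoneOn.congr (f₁ := fun y => (1 - v) * y ^ (-v) + v * y ^ (1 - v)) ?_
    fun x hx => (weightedMeanRatio_eq_add_rpow v hx.1).symm
  refine antitoneOn_of_hasDerivWithinAt_nonpos (f' := fun x => v * (1 - v) * x ^ (-v - 1) * (x - 1))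
    (convex_Ioc 0 1) ?_ (fun x hx => ?_) (fun x hx => ?_)
  · exact fun x hx => (hasDerivAt_rpow_combination v hx.1).continuousAt.continuousWithinAt
  · rw [interior_Ioc] at hx
    exact (hasDerivAt_rpow_combination v hx.1).hasDerivWithinAt
  · rw [interior_Ioc] at hx
    have hcoeff : 0 ≤ v * (1 - v) * x ^ (-v - 1) :=
      mul_nonneg (mul_nonneg hv0 (sub_nonneg.mpr hv1)) (rpow_nonneg hx.1.le _)
    exact mul_nonpos_of_nonneg_of_nonpos hcoeff (sub_nonpos.mpr hx.2.le)

lemma weightedMean_eq_weightedMeanRatio_mul {a b : ℝ} (v : ℝ) (ha : 0 < a) (hb : 0 < b) :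
    (1 - v) * a + v * b = weightedMeanRatio v (b / a) * (a ^ (1 - v) * b ^ v) := by
  have hgeom : a ^ (1 - v) * b ^ v = a * (b / a) ^ v := by
    rw [div_rpow hb.le ha.le, rpow_sub ha, rpow_one]
    field_simp
  rw [hgeom, weightedMeanRatio]
  field_simp

theorem stmt_12_general (a b s t v : ℝ) (ha : 0 < a) (hb : 0 < b)
    (hs : 0 < s) (ht : t ≤ 1)
    (hsa : s * a ≤ b) (hbt : b ≤ t * a) (hv0 : 0 ≤ v) (hv1 : v ≤ 1) :
    ((1 - v) + v * t) / t ^ v * (a ^ (1 - v) * b ^ v) ≤ (1 - v) * a + v * b ∧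
    (1 - v) * a + v * b ≤ ((1 - v) + v * s) / s ^ v * (a ^ (1 - v) * b ^ v) := by
  have hsr : s ≤ b / a := (le_div_iff₀ ha).mpr hsa
  have hrt : b / a ≤ t := (div_le_iff₀ ha).mpr hbt
  have hs_mem : s ∈ Ioc (0 : ℝ) 1 := ⟨hs, by linarith⟩
  have hr_mem : b / a ∈ Ioc (0 : ℝ) 1 := ⟨hs.trans_le hsr, hrt.trans ht⟩
  have ht_mem : t ∈ Ioc (0 : ℝ) 1 := ⟨hs.trans_le (hsr.trans hrt), ht⟩
  have hgeom : 0 ≤ a ^ (1 - v) * b ^ v := by positivity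
  have hf := antitoneOn_weightedMeanRatio hv0 hv1
  rw [weightedMean_eq_weightedMeanRatio_mul v ha hb]
  exact ⟨mul_le_mul_of_nonneg_right (hf hr_mem ht_mem hrt) hgeom,
    mul_le_mul_of_nonneg_right (hf hs_mem hr_mem hsr) hgeom⟩

theorem stmt_12 (a b s t v : ℝ) (ha : 0 < a) (hb : 0 < b)
    (hs : 0 < s) (hst : s ≤ t) (ht : t ≤ 1)
    (hsa : s * a ≤ b) (hbt : b ≤ t * a) (hv0 : 0 ≤ v) (hv1 : v ≤ 1) :
    ((1 - v) + v * t) / t ^ v * (a ^ (1 - v) * b ^ v) ≤ (1 - v) * a + v * b ∧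
    (1 - v) * a + v * b ≤ ((1 - v) + v * s) / s ^ v * (a ^ (1 - v) * b ^ v) :=
  stmt_12_general a b s t v ha hb hs ht hsa hbt hv0 hv1
end

section
/- For positive reals a, b with s·a ≤ b ≤ t·a for some 1 ≤ s ≤ t, and v ∈ [0,1]: f_v(s)·a^(1-v)·b^v ≤ (1-v)a + vb ≤ f_v(t)·a^(1-v)·b^v, where f_v(x) = ((1-v)+vx)/x^v. -/
/-! `amGmRatio v x` compares the weighted arithmetic and geometric means of `1` and `x`, so
homogeneity gives `(1 - v) a + v b = amGmRatio v (b / a) · a^(1-v) b^v`, and the theorem reduces to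
the monotonicity of `amGmRatio v` on `[1, ∞)`. That monotonicity follows from Bernoulli's
inequality `y^v ≤ 1 + v (y - 1)` applied to `y = x / s`. -/

open Real Set

noncomputable def amGmRatio (v x : ℝ) : ℝ := ((1 - v) + v * x) / x ^ v

theorem amGmRatio_mul_le_of_one_le {v s y : ℝ} (hv0 : 0 ≤ v) (hv1 : v ≤ 1)
    (hs : 1 ≤ s) (hy : 1 ≤ y) : amGmRatio v s ≤ amGmRatio v (s * y) := by
  have hs0 : 0 < s := by linarith
  have hy0 : 0 < y := by linarith
  have bernoulli : y ^ v ≤ 1 + v * (y - 1) := by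
    simpa using rpow_one_add_le_one_add_mul_self (s := y - 1) (by linarith) hv0 hv1
  -- the gap is `v (1 - v) (s - 1) (y - 1)`
  have gap : ((1 - v) + v * s) * (1 + v * (y - 1)) ≤ (1 - v) + v * (s * y) := by
    nlinarith [mul_nonneg (mul_nonneg (mul_nonneg hv0 (sub_nonneg.2 hv1))
      (sub_nonneg.2 hs)) (sub_nonneg.2 hy)]
  unfold amGmRatio
  rw [mul_rpow hs0.le hy0.le, div_le_div_iff₀ (by positivity) (by positivity)]
  calc ((1 - v) + v * s) * (s ^ v * y ^ v)
      ≤ ((1 - v) + v * s) * (1 + v * (y - 1)) * s ^ v := by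
        rw [mul_comm (s ^ v), ← mul_assoc]
        gcongr
    _ ≤ ((1 - v) + v * (s * y)) * s ^ v := by gcongr

theorem monotoneOn_amGmRatio {v : ℝ} (hv0 : 0 ≤ v) (hv1 : v ≤ 1) :
    MonotoneOn (amGmRatio v) (Ici 1) := by
  intro s hs x _ hsx
  have hs0 : 0 < s := lt_of_lt_of_le one_pos hs
  simpa [mul_div_cancel₀ x hs0.ne'] using
    amGmRatio_mul_le_of_one_le hv0 hv1 hs ((one_le_div hs0).2 hsx)

theorem amGmRatio_div_mul_rpow {a b : ℝ} (v : ℝ) (ha : 0 < a) (hb : 0 < b) :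
    amGmRatio v (b / a) * (a ^ (1 - v) * b ^ v) = (1 - v) * a + v * b := by
  rw [amGmRatio, div_rpow hb.le ha.le, rpow_sub ha, rpow_one]
  field_simp

theorem stmt_13_general (a b s t v : ℝ) (ha : 0 < a) (hb : 0 < b)
    (hs : 1 ≤ s)
    (hsa : s * a ≤ b) (hbt : b ≤ t * a) (hv0 : 0 ≤ v) (hv1 : v ≤ 1) :
    ((1 - v) + v * s) / s ^ v * (a ^ (1 - v) * b ^ v) ≤ (1 - v) * a + v * b ∧
    (1 - v) * a + v * b ≤ ((1 - v) + v * t) / t ^ v * (a ^ (1 - v) * b ^ v) := by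
  have hsx : s ≤ b / a := (le_div_iff₀ ha).2 hsa
  have hxt : b / a ≤ t := (div_le_iff₀ ha).2 hbt
  have hx : (1 : ℝ) ≤ b / a := hs.trans hsx
  have hgm : 0 ≤ a ^ (1 - v) * b ^ v := by positivity
  rw [← amGmRatio_div_mul_rpow v ha hb]
  exact ⟨mul_le_mul_of_nonneg_right (monotoneOn_amGmRatio hv0 hv1 hs hx hsx) hgm,
    mul_le_mul_of_nonneg_right
      (monotoneOn_amGmRatio hv0 hv1 hx (hx.trans hxt) hxt) hgm⟩

theorem stmt_13 (a b s t v : ℝ) (ha : 0 < a) (hb : 0 < b)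
    (hs : 1 ≤ s) (hst : s ≤ t)
    (hsa : s * a ≤ b) (hbt : b ≤ t * a) (hv0 : 0 ≤ v) (hv1 : v ≤ 1) :
    ((1 - v) + v * s) / s ^ v * (a ^ (1 - v) * b ^ v) ≤ (1 - v) * a + v * b ∧
    (1 - v) * a + v * b ≤ ((1 - v) + v * t) / t ^ v * (a ^ (1 - v) * b ^ v) :=
  stmt_13_general a b s t v ha hb hs hsa hbt hv0 hv1
end

section
/- For positive reals a, b with s·a ≤ b ≤ t·a for some 0 < s ≤ t, and v ∈ [0,1]: (1-v)a + vb - a^(1-v)b^v ≤ max{g_v(s), g_v(t)}·a, where g_v(x) = (1-v) + vx - x^v. -/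
/-!
With `g_v = youngGap v` and `x = b / a`, homogeneity turns the left-hand side into `g_v(x) · a`,
where `s ≤ x ≤ t`.
For `v ∈ [0, 1]` the map `g_v` is convex on `[0, ∞)` (a linear function minus the concave `x ↦ x ^ v`),
so on `[s, t]` it is bounded by its values at the endpoints.
-/

open Set

noncomputable section

namespace YoungGap

def youngGap (v x : ℝ) : ℝ := 1 - v + v * x - x ^ v

theorem convexOn_youngGap {v : ℝ} (hv0 : 0 ≤ v) (hv1 : v ≤ 1) :
    ConvexOn ℝ (Ici 0) (youngGap v) := by
  have hlin : ConvexOn ℝ (Ici 0) fun x : ℝ ↦ 1 - v + v * x :=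
    (convexOn_const _ (convex_Ici 0)).add ((convexOn_id (convex_Ici 0)).smul hv0)
  exact hlin.sub (Real.concaveOn_rpow hv0 hv1)

theorem youngGap_le_max {v s t x : ℝ} (hv0 : 0 ≤ v) (hv1 : v ≤ 1) (hs : 0 ≤ s)
    (hx : x ∈ Icc s t) : youngGap v x ≤ max (youngGap v s) (youngGap v t) :=
  (convexOn_youngGap hv0 hv1).le_max_of_mem_Icc hs (hs.trans (hx.1.trans hx.2)) hx

theorem weighted_sub_rpow_mul_rpow_eq {a b : ℝ} (v : ℝ) (ha : 0 < a) (hb : 0 ≤ b) :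
    (1 - v) * a + v * b - a ^ (1 - v) * b ^ v = youngGap v (b / a) * a := by
  have hgeom : a ^ (1 - v) * b ^ v = (b / a) ^ v * a := by
    rw [Real.div_rpow hb ha.le, Real.rpow_sub ha, Real.rpow_one]
    field_simp
  rw [hgeom, youngGap]
  field_simp

end YoungGap

end

open YoungGap in
theorem stmt_14_general (a b s t v : ℝ) (ha : 0 < a) (hb : 0 < b)
    (hs : 0 < s)
    (hsa : s * a ≤ b) (hbt : b ≤ t * a) (hv0 : 0 ≤ v) (hv1 : v ≤ 1) :
    (1 - v) * a + v * b - a ^ (1 - v) * b ^ v ≤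
      max ((1 - v) + v * s - s ^ v) ((1 - v) + v * t - t ^ v) * a := by
  have hx : b / a ∈ Icc s t := ⟨(le_div_iff₀ ha).2 hsa, (div_le_iff₀ ha).2 hbt⟩
  rw [weighted_sub_rpow_mul_rpow_eq v ha hb.le]
  exact mul_le_mul_of_nonneg_right (youngGap_le_max hv0 hv1 hs.le hx) ha.le

theorem stmt_14 (a b s t v : ℝ) (ha : 0 < a) (hb : 0 < b)
    (hs : 0 < s) (hst : s ≤ t)
    (hsa : s * a ≤ b) (hbt : b ≤ t * a) (hv0 : 0 ≤ v) (hv1 : v ≤ 1) :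
    (1 - v) * a + v * b - a ^ (1 - v) * b ^ v ≤
      max ((1 - v) + v * s - s ^ v) ((1 - v) + v * t - t ^ v) * a :=
  stmt_14_general a b s t v ha hb hs hsa hbt hv0 hv1
end

section
/- For positive reals a, b with s·a ≤ b ≤ t·a for some 1 ≤ s ≤ t, and v ∈ [0,1]: g_v(s)·a ≤ (1-v)a + vb - a^(1-v)b^v ≤ g_v(t)·a, where g_v(x) = (1-v) + vx - x^v. -/
/-! The middle expression equals `g_v(b/a) · a` after factoring out `a` (with `g_v = youngGap v`), so both bounds
follow from monotonicity of `g_v` on `[1, ∞)`. That in turn is the Bernoulli inequality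
`(y/x)^v ≤ 1 + v (y/x - 1)` combined with `x^(v-1) ≤ 1` for `x ≥ 1`. -/

open Real Set

namespace Real

noncomputable def youngGap (v x : ℝ) : ℝ := (1 - v) + v * x - x ^ v

variable {v : ℝ}

theorem rpow_sub_rpow_le_mul_sub {x y : ℝ} (hx : 1 ≤ x) (hxy : x ≤ y) (hv0 : 0 ≤ v)
    (hv1 : v ≤ 1) : y ^ v - x ^ v ≤ v * (y - x) := by
  have hx0 : 0 < x := one_pos.trans_le hx
  have hbernoulli : (1 + (y / x - 1)) ^ v ≤ 1 + v * (y / x - 1) :=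
    rpow_one_add_le_one_add_mul_self (by linarith [div_pos (hx0.trans_le hxy) hx0]) hv0 hv1
  rw [add_sub_cancel] at hbernoulli
  have hfactor : y ^ v = x ^ v * (y / x) ^ v := by
    rw [← mul_rpow hx0.le (div_nonneg (hx0.le.trans hxy) hx0.le), mul_div_cancel₀ _ hx0.ne']
  have hderiv : x ^ v * (v * (y / x - 1)) = v * x ^ (v - 1) * (y - x) := by
    rw [rpow_sub hx0, rpow_one]
    field_simp
  have hderiv_le_one : x ^ (v - 1) ≤ 1 := rpow_le_one_of_one_le_of_nonpos hx (by linarith)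
  calc y ^ v - x ^ v ≤ x ^ v * (v * (y / x - 1)) := by
        rw [hfactor]
        nlinarith [rpow_nonneg hx0.le v]
    _ = v * x ^ (v - 1) * (y - x) := hderiv
    _ ≤ v * (y - x) := by
        have : 0 ≤ v * (y - x) := mul_nonneg hv0 (by linarith)
        nlinarith

theorem youngGap_monotoneOn (hv0 : 0 ≤ v) (hv1 : v ≤ 1) : MonotoneOn (youngGap v) (Ici 1) := by
  intro x hx y _ hxy
  have := rpow_sub_rpow_le_mul_sub (mem_Ici.mp hx) hxy hv0 hv1
  simp only [youngGap]
  linarith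

theorem youngGap_div_mul {a b : ℝ} (ha : 0 < a) (hb : 0 ≤ b) :
    youngGap v (b / a) * a = (1 - v) * a + v * b - a ^ (1 - v) * b ^ v := by
  rw [youngGap, div_rpow hb ha.le, rpow_sub ha, rpow_one]
  field_simp

end Real

theorem stmt_15_general (a b s t v : ℝ) (ha : 0 < a) (hb : 0 < b)
    (hs : 1 ≤ s)
    (hsa : s * a ≤ b) (hbt : b ≤ t * a) (hv0 : 0 ≤ v) (hv1 : v ≤ 1) :
    ((1 - v) + v * s - s ^ v) * a ≤ (1 - v) * a + v * b - a ^ (1 - v) * b ^ v ∧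
    (1 - v) * a + v * b - a ^ (1 - v) * b ^ v ≤ ((1 - v) + v * t - t ^ v) * a := by
  have hsx : s ≤ b / a := (le_div_iff₀ ha).mpr hsa
  have hxt : b / a ≤ t := (div_le_iff₀ ha).mpr hbt
  have hx1 : (1 : ℝ) ≤ b / a := hs.trans hsx
  have hmono := youngGap_monotoneOn hv0 hv1
  rw [← youngGap_div_mul ha hb.le]
  exact ⟨mul_le_mul_of_nonneg_right (hmono hs hx1 hsx) ha.le,
    mul_le_mul_of_nonneg_right (hmono hx1 (hx1.trans hxt) hxt) ha.le⟩

theorem stmt_15 (a b s t v : ℝ) (ha : 0 < a) (hb : 0 < b)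
    (hs : 1 ≤ s) (hst : s ≤ t)
    (hsa : s * a ≤ b) (hbt : b ≤ t * a) (hv0 : 0 ≤ v) (hv1 : v ≤ 1) :
    ((1 - v) + v * s - s ^ v) * a ≤ (1 - v) * a + v * b - a ^ (1 - v) * b ^ v ∧
    (1 - v) * a + v * b - a ^ (1 - v) * b ^ v ≤ ((1 - v) + v * t - t ^ v) * a :=
  stmt_15_general a b s t v ha hb hs hsa hbt hv0 hv1
end

section
/- Let 0 < m' ≤ a ≤ m < M ≤ b ≤ M' and v ∈ [0,1]. Then ((m∇_v M)/(m♯_v M))·a^(1-v)b^v ≤ (1-v)a + vb ≤ ((m'∇_v M')/(m'♯_v M'))·a^(1-v)b^v, where x∇_v y = (1-v)x + vy and x♯_v y = x^(1-v)y^v. -/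
lemma aux_mono (v : ℝ) (hv0 : 0 ≤ v) (hv1 : v ≤ 1) :
    MonotoneOn (fun t : ℝ => (1 - v) * t ^ (-v) + v * t ^ (1 - v)) (Set.Ici 1) := by
  have hne : ∀ x ∈ Set.Ici (1:ℝ), x ≠ 0 := fun x hx =>
    ne_of_gt (lt_of_lt_of_le zero_lt_one hx)
  have c1 : ContinuousOn (fun t : ℝ => t ^ (-v)) (Set.Ici 1) :=
    ContinuousOn.rpow_const continuousOn_id (fun x hx => Or.inl (hne x hx))
  have c2 : ContinuousOn (fun t : ℝ => t ^ (1 - v)) (Set.Ici 1) :=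
    ContinuousOn.rpow_const continuousOn_id (fun x hx => Or.inl (hne x hx))
  have hd : ∀ x ∈ interior (Set.Ici (1:ℝ)),
      HasDerivAt (fun t : ℝ => (1 - v) * t ^ (-v) + v * t ^ (1 - v))
        ((1 - v) * (-v * x ^ (-v - 1)) + v * ((1 - v) * x ^ (1 - v - 1))) x := by
    intro x hx
    rw [interior_Ici] at hx
    have hx0 : x ≠ 0 := ne_of_gt (lt_trans zero_lt_one hx)
    exact (((Real.hasDerivAt_rpow_const (Or.inl hx0)).const_mul (1 - v)).add
      ((Real.hasDerivAt_rpow_const (Or.inl hx0)).const_mul v))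
  apply monotoneOn_of_deriv_nonneg (convex_Ici 1)
  · exact (c1.const_smul (1 - v)).add (c2.const_smul v)
  · intro x hx
    exact (hd x hx).differentiableAt.differentiableWithinAt
  · intro x hx
    rw [(hd x hx).deriv]
    rw [interior_Ici] at hx
    have h1 : x ^ (-v - 1) ≤ x ^ (-v) :=
      Real.rpow_le_rpow_of_exponent_le (le_of_lt hx) (by linarith)
    have heq : (1 - v) * (-v * x ^ (-v - 1)) + v * ((1 - v) * x ^ (1 - v - 1))
        = v * (1 - v) * (x ^ (-v) - x ^ (-v - 1)) := by ring_nf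
    rw [heq]
    have hnn : 0 ≤ x ^ (-v) - x ^ (-v - 1) := by linarith
    exact mul_nonneg (mul_nonneg hv0 (by linarith)) hnn

lemma aux_id (v x y : ℝ) (hx : 0 < x) (hy : 0 < y) :
    (1 - v) * (y / x) ^ (-v) + v * (y / x) ^ (1 - v)
      = ((1 - v) * x + v * y) / (x ^ (1 - v) * y ^ v) := by
  have e1 : (y / x) ^ (-v) = x ^ v / y ^ v := by
    rw [Real.rpow_neg (div_pos hy hx).le, Real.div_rpow hy.le hx.le, inv_div]
  have e2 : (y / x) ^ (1 - v) = y ^ (1 - v) / x ^ (1 - v) :=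
    Real.div_rpow hy.le hx.le _
  have hx1 : x ^ (1 - v) * x ^ v = x := by
    rw [← Real.rpow_add hx]; simp
  have hy1 : y ^ (1 - v) * y ^ v = y := by
    rw [← Real.rpow_add hy]; simp
  have p1 : (0:ℝ) < x ^ v := Real.rpow_pos_of_pos hx _
  have p2 : (0:ℝ) < y ^ v := Real.rpow_pos_of_pos hy _
  have p3 : (0:ℝ) < x ^ (1 - v) := Real.rpow_pos_of_pos hx _
  have p4 : (0:ℝ) < y ^ (1 - v) := Real.rpow_pos_of_pos hy _
  rw [e1, e2]
  set P := x ^ v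
  set Q := x ^ (1 - v)
  set R := y ^ v
  set S := y ^ (1 - v)
  rw [← hx1, ← hy1]
  field_simp

theorem stmt_17 (a b m m' M M' v : ℝ) (hm' : 0 < m')
    (h1 : m' ≤ a) (h2 : a ≤ m) (h3 : m < M) (h4 : M ≤ b) (h5 : b ≤ M')
    (hv0 : 0 ≤ v) (hv1 : v ≤ 1) :
    ((1 - v) * m + v * M) / (m ^ (1 - v) * M ^ v) * (a ^ (1 - v) * b ^ v) ≤
      (1 - v) * a + v * b ∧
    (1 - v) * a + v * b ≤
      ((1 - v) * m' + v * M') / (m' ^ (1 - v) * M' ^ v) * (a ^ (1 - v) * b ^ v) := by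
  have ha : 0 < a := lt_of_lt_of_le hm' h1
  have hm : 0 < m := lt_of_lt_of_le ha h2
  have hM : 0 < M := lt_trans hm h3
  have hb : 0 < b := lt_of_lt_of_le hM h4
  have hM'p : 0 < M' := lt_of_lt_of_le hb h5
  have t1 : (1:ℝ) ≤ M / m := (one_le_div hm).mpr h3.le
  have t2 : (1:ℝ) ≤ b / a := (one_le_div ha).mpr (le_trans h2 (le_trans h3.le h4))
  have t3 : (1:ℝ) ≤ M' / m' := le_trans t2 ((div_le_div_iff₀ ha hm').mpr
    (mul_le_mul h5 h1 hm'.le hM'p.le))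
  have h12 : M / m ≤ b / a := (div_le_div_iff₀ hm ha).mpr
    (le_trans (mul_le_mul_of_nonneg_left h2 hM.le) (mul_le_mul_of_nonneg_right h4 hm.le))
  have h23 : b / a ≤ M' / m' := (div_le_div_iff₀ ha hm').mpr
    (mul_le_mul h5 h1 hm'.le hM'p.le)
  have mono := aux_mono v hv0 hv1
  have i1 := mono (Set.mem_Ici.mpr t1) (Set.mem_Ici.mpr t2) h12
  have i2 := mono (Set.mem_Ici.mpr t2) (Set.mem_Ici.mpr t3) h23
  simp only at i1 i2
  rw [aux_id v m M hm hM, aux_id v a b ha hb] at i1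
  rw [aux_id v a b ha hb, aux_id v m' M' hm' hM'p] at i2
  have pK : (0:ℝ) < a ^ (1 - v) * b ^ v :=
    mul_pos (Real.rpow_pos_of_pos ha _) (Real.rpow_pos_of_pos hb _)
  constructor
  · exact (le_div_iff₀ pK).mp i1
  · exact (div_le_iff₀ pK).mp i2
end

section
/- Let 0 < m' ≤ a ≤ m < M ≤ b ≤ M' and v ∈ [0,1]. Then ((m' !_v M')/(m'♯_v M'))·a^(1-v)b^v ≤ ((1-v)a^{-1} + v b^{-1})^{-1} ≤ ((m !_v M)/(m♯_v M))·a^(1-v)b^v, where x!_v y = ((1-v)/x + v/y)^{-1} is the weighted harmonic mean and x♯_v y = x^(1-v)y^v. -/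
private lemma f_pos {x v : ℝ} (hx : 0 < x) (hv0 : 0 ≤ v) (hv1 : v ≤ 1) :
    0 < (1 - v) * x ^ v + v * x ^ (v - 1) := by
  rcases eq_or_lt_of_le hv0 with h | h
  · simp [← h]
  · have h2 : 0 < v * x ^ (v - 1) := mul_pos h (Real.rpow_pos_of_pos hx _)
    have h3 : (0:ℝ) ≤ (1 - v) * x ^ v :=
      mul_nonneg (by linarith) (Real.rpow_pos_of_pos hx _).le
    linarith

private lemma f_mono (v : ℝ) (hv0 : 0 ≤ v) (hv1 : v ≤ 1) :
    MonotoneOn (fun x : ℝ => (1 - v) * x ^ v + v * x ^ (v - 1)) (Set.Ici 1) := by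
  have hderiv : ∀ x ∈ interior (Set.Ici (1:ℝ)), HasDerivAt
      (fun x : ℝ => (1 - v) * x ^ v + v * x ^ (v - 1))
      ((1 - v) * (v * x ^ (v - 1)) + v * ((v - 1) * x ^ (v - 1 - 1))) x := by
    intro x hx
    rw [interior_Ici] at hx
    have hx1 : (1:ℝ) < x := hx
    have hxne : x ≠ 0 := by positivity
    exact ((Real.hasDerivAt_rpow_const (Or.inl hxne)).const_mul (1 - v)).add
      ((Real.hasDerivAt_rpow_const (Or.inl hxne)).const_mul v)
  apply monotoneOn_of_deriv_nonneg (convex_Ici 1)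
  · apply ContinuousOn.add
    · exact (continuousOn_const.mul ((continuousOn_id).rpow_const
        (fun x hx => Or.inr hv0)))
    · apply continuousOn_const.mul
      apply ContinuousOn.rpow_const continuousOn_id
      intro x hx
      exact Or.inl (by simp at hx ⊢; positivity)
  · intro x hx
    exact (hderiv x hx).differentiableAt.differentiableWithinAt
  · intro x hx
    rw [(hderiv x hx).deriv]
    rw [interior_Ici] at hx
    have hx1 : (1:ℝ) < x := hx
    have hx0 : (0:ℝ) < x := by linarith
    have e1 : x ^ (v - 1) = x ^ (v - 1 - 1) * x := by
      rw [← Real.rpow_add_one (by positivity)]; ring_nf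
    have hp : 0 < x ^ (v - 1 - 1) := Real.rpow_pos_of_pos hx0 _
    rw [e1]
    nlinarith [mul_nonneg (mul_nonneg hv0 (by linarith : (0:ℝ) ≤ 1 - v)) hp.le]

private lemma H_eq (a b v : ℝ) (ha : 0 < a) (hb : 0 < b) (hv0 : 0 ≤ v) (hv1 : v ≤ 1) :
    ((1 - v) * a⁻¹ + v * b⁻¹)⁻¹ =
      (a ^ (1 - v) * b ^ v) / ((1 - v) * (b / a) ^ v + v * (b / a) ^ (v - 1)) := by
  have hA : (0:ℝ) < a ^ v := Real.rpow_pos_of_pos ha _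
  have hB : (0:ℝ) < b ^ v := Real.rpow_pos_of_pos hb _
  have e1 : (b / a) ^ v = b ^ v / a ^ v := Real.div_rpow hb.le ha.le v
  have e2 : (b / a) ^ (v - 1) = (b ^ v / b) / (a ^ v / a) := by
    rw [Real.div_rpow hb.le ha.le (v-1), Real.rpow_sub hb, Real.rpow_sub ha,
      Real.rpow_one, Real.rpow_one]
  have e3 : a ^ (1 - v) = a / a ^ v := by
    rw [Real.rpow_sub ha, Real.rpow_one]
  have hsum : 0 < (1 - v) * a⁻¹ + v * b⁻¹ := by
    rcases eq_or_lt_of_le hv0 with h | h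
    · simp [← h]; positivity
    · have t1 : 0 < v * b⁻¹ := by positivity
      have t2 : (0:ℝ) ≤ (1 - v) * a⁻¹ := mul_nonneg (by linarith) (by positivity)
      linarith
  have key : ((1 - v) * (b / a) ^ v + v * (b / a) ^ (v - 1)) =
      ((1 - v) * a⁻¹ + v * b⁻¹) * (a ^ (1 - v) * b ^ v) := by
    rw [e1, e2, e3]
    field_simp
  have hg : 0 < a ^ (1 - v) * b ^ v := by
    have := Real.rpow_pos_of_pos ha (1 - v)
    positivity
  rw [key]
  rw [mul_comm ((1 - v) * a⁻¹ + v * b⁻¹), div_mul_eq_div_div, div_self hg.ne']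
  rw [one_div]

theorem stmt_18 (a b m m' M M' v : ℝ) (hm' : 0 < m')
    (h1 : m' ≤ a) (h2 : a ≤ m) (h3 : m < M) (h4 : M ≤ b) (h5 : b ≤ M')
    (hv0 : 0 ≤ v) (hv1 : v ≤ 1) :
    ((1 - v) / m' + v / M')⁻¹ / (m' ^ (1 - v) * M' ^ v) * (a ^ (1 - v) * b ^ v) ≤
      ((1 - v) * a⁻¹ + v * b⁻¹)⁻¹ ∧
    ((1 - v) * a⁻¹ + v * b⁻¹)⁻¹ ≤
      ((1 - v) / m + v / M)⁻¹ / (m ^ (1 - v) * M ^ v) * (a ^ (1 - v) * b ^ v) := by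
  have ha : 0 < a := lt_of_lt_of_le hm' h1
  have hm : 0 < m := lt_of_lt_of_le ha h2
  have hM : 0 < M := hm.trans h3
  have hb : 0 < b := lt_of_lt_of_le hM h4
  have hM'' : 0 < M' := lt_of_lt_of_le hb h5
  set F : ℝ → ℝ := fun x => (1 - v) * x ^ v + v * x ^ (v - 1) with hF
  have hg : 0 < a ^ (1 - v) * b ^ v := by
    have := Real.rpow_pos_of_pos ha (1 - v)
    have := Real.rpow_pos_of_pos hb v
    positivity
  have Hab : ((1 - v) * a⁻¹ + v * b⁻¹)⁻¹ = (a ^ (1 - v) * b ^ v) / F (b / a) :=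
    H_eq a b v ha hb hv0 hv1
  have rhs_eq : ∀ x y : ℝ, 0 < x → 0 < y →
      ((1 - v) / x + v / y)⁻¹ / (x ^ (1 - v) * y ^ v) * (a ^ (1 - v) * b ^ v) =
        (a ^ (1 - v) * b ^ v) / F (y / x) := by
    intro x y hx hy
    have hG : 0 < x ^ (1 - v) * y ^ v := by
      have := Real.rpow_pos_of_pos hx (1 - v)
      have := Real.rpow_pos_of_pos hy v
      positivity
    have hFxy : 0 < F (y / x) := f_pos (div_pos hy hx) hv0 hv1
    have e : ((1 - v) / x + v / y)⁻¹ = (x ^ (1 - v) * y ^ v) / F (y / x) := by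
      simpa [div_eq_mul_inv] using H_eq x y v hx hy hv0 hv1
    rw [e]
    field_simp
  have hba1 : (1:ℝ) ≤ b / a := (one_le_div ha).mpr (le_trans h2 (le_trans h3.le h4))
  constructor
  · rw [Hab, rhs_eq m' M' hm' hM'']
    have h1le : (1:ℝ) ≤ M' / m' :=
      le_trans hba1 (by rw [div_le_div_iff₀ ha hm']; nlinarith)
    have hle : b / a ≤ M' / m' := by rw [div_le_div_iff₀ ha hm']; nlinarith
    have := f_mono v hv0 hv1 (Set.mem_Ici.mpr hba1) (Set.mem_Ici.mpr h1le) hle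
    have hp : 0 < F (b / a) := f_pos (div_pos hb ha) hv0 hv1
    gcongr
  · rw [Hab, rhs_eq m M hm hM]
    have h1le : (1:ℝ) ≤ M / m := (one_le_div hm).mpr h3.le
    have hle : M / m ≤ b / a := by rw [div_le_div_iff₀ hm ha]; nlinarith
    have := f_mono v hv0 hv1 (Set.mem_Ici.mpr h1le) (Set.mem_Ici.mpr hba1) hle
    have hp : 0 < F (M / m) := f_pos (div_pos hM hm) hv0 hv1
    gcongr
end
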